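/- Let S = {x ∈ ℝⁿ : ‖x‖₀ ≤ s} with s < n, and let x* ∈ S with support supp(x*) = {i : xᵢ* ≠ 0}. If |supp(x*)| = s, then the Bouligand tangent cone to S at x* equals the coordinate subspace ℝ_{supp(x*)} = {d ∈ ℝⁿ : dᵢ = 0 for all i ∉ supp(x*)}. -/

import Mathlib

open Filter Topology Metric Set
open scoped Classical

noncomputable section

abbrev E (n : ℕ) := EuclideanSpace ℝ (Fin n)

/-- Bouligand tangent cone. -/
def bouligand {n : ℕ} (S : Set (E n)) (x : E n) : Set (E n) :=
  {d | ∃ t : ℕ → ℝ, ∃ dk : ℕ → E n,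
    (∀ k, 0 < t k) ∧ Tendsto t atTop (𝓝 0) ∧ Tendsto dk atTop (𝓝 d) ∧
    ∀ k, x + t k • dk k ∈ S}

/-- Fréchet (regular) normal cone. -/
def frechetNormal {n : ℕ} (S : Set (E n)) (x : E n) : Set (E n) :=
  {v | ∀ ε > (0 : ℝ), ∃ δ > (0 : ℝ), ∀ y ∈ S, ‖y - x‖ < δ →
    (inner ℝ v (y - x) : ℝ) ≤ ε * ‖y - x‖}

/-- Mordukhovich (limiting) normal cone. -/
def limitingNormal {n : ℕ} (S : Set (E n)) (x : E n) : Set (E n) :=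
  {v | ∃ xk : ℕ → E n, ∃ vk : ℕ → E n,
    (∀ k, xk k ∈ S) ∧ Tendsto xk atTop (𝓝 x) ∧
    (∀ k, vk k ∈ frechetNormal S (xk k)) ∧ Tendsto vk atTop (𝓝 v)}

/-- Directional limiting normal cone. -/
def dirLimitingNormal {n : ℕ} (S : Set (E n)) (x d : E n) : Set (E n) :=
  {v | ∃ t : ℕ → ℝ, ∃ dk : ℕ → E n, ∃ vk : ℕ → E n,
    (∀ k, 0 < t k) ∧ Tendsto t atTop (𝓝 0) ∧ Tendsto dk atTop (𝓝 d) ∧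
    Tendsto vk atTop (𝓝 v) ∧ ∀ k, vk k ∈ frechetNormal S (x + t k • dk k)}

/-- Support of a vector. -/
def supp {n : ℕ} (x : E n) : Finset (Fin n) := Finset.univ.filter (fun i => x i ≠ 0)

/-- The ℓ₀ "norm": number of nonzero components. -/
def l0 {n : ℕ} (x : E n) : ℕ := (supp x).card

/-- The sparsity set {x : ‖x‖₀ ≤ s}. -/
def sparseSet (n s : ℕ) : Set (E n) := {x | l0 x ≤ s}

/-- Coordinate subspace ℝ_I of vectors supported on I. -/
def coordSub {n : ℕ} (I : Finset (Fin n)) : Set (E n) := {x | ∀ i ∉ I, x i = 0}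


/-! If `d` had a nonzero coordinate `i` outside `supp x`, then along an approximating sequence
`x + tₖ dₖ ∈ S` the coordinates in `supp x` stay nonzero (the support is lower semicontinuous)
while coordinate `i` equals `tₖ (dₖ)ᵢ ≠ 0`, producing `s + 1` nonzero entries. Conversely, a
direction supported on `supp x` keeps every ray `x + t d` inside `supp x`, hence inside `S`. -/

lemma mem_supp {n : ℕ} {x : E n} {i : Fin n} : i ∈ supp x ↔ x i ≠ 0 := by
  simp [supp]

lemma mem_bouligand_of_forall_add_smul_mem {n : ℕ} {S : Set (E n)} {x d : E n}
    (h : ∀ t > (0 : ℝ), x + t • d ∈ S) : d ∈ bouligand S x :=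
  ⟨fun k => 1 / (k + 1), fun _ => d, fun k => by positivity,
    tendsto_one_div_add_atTop_nhds_zero_nat, tendsto_const_nhds, fun k => h _ (by positivity)⟩

lemma supp_add_smul_subset {n : ℕ} {x d : E n} (hd : ∀ i ∉ supp x, d i = 0) (t : ℝ) :
    supp (x + t • d) ⊆ supp x := by
  intro i hi
  by_contra hxi
  have hdi : d i = 0 := hd i hxi
  rw [mem_supp, not_not] at hxi
  simp [mem_supp, hxi, hdi] at hi

lemma eventually_supp_subset {n : ℕ} {x : E n} {y : ℕ → E n}
    (hy : Tendsto y atTop (𝓝 x)) : ∀ᶠ k in atTop, supp x ⊆ supp (y k) := by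
  refine (eventually_all_finset (supp x)).2 fun i hi => ?_
  simp only [mem_supp] at hi ⊢
  exact ((PiLp.continuous_apply 2 _ i).tendsto x |>.comp hy).eventually_ne hi

lemma eq_zero_of_mem_bouligand_sparseSet {n : ℕ} {x d : E n}
    (hd : d ∈ bouligand (sparseSet n (supp x).card) x) : ∀ i ∉ supp x, d i = 0 := by
  obtain ⟨t, dk, hpos, ht, hdk, hmem⟩ := hd
  intro i hi
  by_contra hdi
  have hdki : ∀ᶠ k in atTop, dk k i ≠ 0 :=
    ((PiLp.continuous_apply 2 _ i).tendsto d |>.comp hdk).eventually_ne hdi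
  have hxk : Tendsto (fun k => x + t k • dk k) atTop (𝓝 x) := by
    simpa using tendsto_const_nhds.add (ht.smul hdk)
  obtain ⟨k, hki, hsub⟩ := (hdki.and (eventually_supp_subset hxk)).exists
  have hxi : x i = 0 := by simpa [mem_supp] using hi
  have hik : i ∈ supp (x + t k • dk k) := by
    simp [mem_supp, hxi, (hpos k).ne', hki]
  have hgrow : (supp x).card + 1 ≤ (supp (x + t k • dk k)).card := by
    simpa [Finset.card_insert_of_notMem hi] using
      Finset.card_le_card (Finset.insert_subset hik hsub)
  have hsparse : (supp (x + t k • dk k)).card ≤ (supp x).card := hmem k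
  omega

theorem stmt10_general {n s : ℕ} (x : E n)
    (hcard : (supp x).card = s) :
    bouligand (sparseSet n s) x = {d : E n | ∀ i ∉ supp x, d i = 0} := by
  subst hcard
  ext d
  refine ⟨eq_zero_of_mem_bouligand_sparseSet, fun hd => ?_⟩
  exact mem_bouligand_of_forall_add_smul_mem fun t _ =>
    Finset.card_le_card (supp_add_smul_subset hd t)

theorem stmt10 {n s : ℕ} (hs : s < n) (x : E n) (hx : x ∈ sparseSet n s)
    (hcard : (supp x).card = s) :
    bouligand (sparseSet n s) x = {d : E n | ∀ i ∉ supp x, d i = 0} :=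
  stmt10_general x hcard
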